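/- For any g > 1 there exists a strictly increasing function B ∈ C²(ℝ,ℝ) with 0 < B(x) < 1 for all x ∈ ℝ, lim_{x→−∞} B(x) = 0 and lim_{x→+∞} B(x) = 1, satisfying B''(x) = −B(x) + B(x)³ whenever B(x)² ≥ 1/g and B''(x) = (g−1)B(x) + (1−g²)B(x)³ whenever B(x)² ≤ 1/g. Moreover, defining A(x) := √(max{0, 1 − gB(x)²}), the function A is continuous on ℝ and the pair (A,B) satisfies A(x)(A(x)² + gB(x)² − 1) = 0 and B''(x) = B(x)(gA(x)² + B(x)² − 1) for all x ∈ ℝ, with lim_{x→−∞}(A(x),B(x)) = (1,0) and lim_{x→+∞}(A(x),B(x)) = (0,1). -/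

import Mathlib

open Real Filter Set

private lemma sq_eq_of_nonneg {x y : ℝ} (hx : 0 ≤ x) (hy : 0 ≤ y) (h : x ^ 2 = y ^ 2) : x = y := by
  rw [← Real.sqrt_sq hx, h, Real.sqrt_sq hy]

private lemma cosh_sinh_log {t r : ℝ} (ht : 1 < t) (hr : 0 ≤ r) (hrel : t ^ 2 - r ^ 2 = 1) :
    0 < Real.log (t + r) ∧ Real.cosh (Real.log (t + r)) = t ∧
      Real.sinh (Real.log (t + r)) = r := by
  have hy : 1 < t + r := by linarith
  have hy0 : 0 < t + r := by linarith
  have hinv : (t + r)⁻¹ = t - r := by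
    field_simp
    nlinarith [hrel]
  refine ⟨Real.log_pos hy, ?_, ?_⟩
  · rw [Real.cosh_log hy0, hinv]; ring
  · rw [Real.sinh_log hy0, hinv]; ring

section Main

variable (g : ℝ) (hg : 1 < g)

noncomputable def kk : ℝ := Real.sqrt (g - 1)
noncomputable def aa : ℝ := Real.sqrt (2 / (g + 1))
noncomputable def tt : ℝ := Real.sqrt (2 * g / (g + 1))
noncomputable def tt' : ℝ := Real.sqrt ((g - 1) / (g + 1))
noncomputable def ss : ℝ := Real.log (tt g + tt' g)
noncomputable def cc : ℝ := Real.sqrt (g / (g - 1))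
noncomputable def cc' : ℝ := Real.sqrt (1 / (g - 1))
noncomputable def dd : ℝ := Real.log (cc g + cc' g)

noncomputable def LL : ℝ → ℝ := fun x => aa g / Real.cosh (kk g * x - ss g)
noncomputable def RR : ℝ → ℝ := fun x =>
  Real.sinh (x / Real.sqrt 2 + dd g) / Real.cosh (x / Real.sqrt 2 + dd g)
noncomputable def BB : ℝ → ℝ := fun x => if x ≤ 0 then LL g x else RR g x
noncomputable def DD1 : ℝ → ℝ := fun x =>
  if x ≤ 0 then aa g * kk g * Real.sinh (ss g - kk g * x) / Real.cosh (kk g * x - ss g) ^ 2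
  else (Real.sqrt 2)⁻¹ / Real.cosh (x / Real.sqrt 2 + dd g) ^ 2
noncomputable def DD2 : ℝ → ℝ := fun x =>
  if x ≤ 0 then (g - 1) * BB g x + (1 - g ^ 2) * BB g x ^ 3
  else -BB g x + BB g x ^ 3

end Main

set_option linter.unusedSectionVars false
section Facts
variable {g : ℝ} (hg : 1 < g)

include hg

lemma hg0 : (0:ℝ) < g := lt_trans one_pos hg
lemma hk_pos : 0 < kk g := Real.sqrt_pos.2 (by linarith)
lemma hk_sq : kk g ^ 2 = g - 1 := Real.sq_sqrt (by linarith)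
lemma ha_pos : 0 < aa g := Real.sqrt_pos.2 (by positivity)
lemma ha_sq : aa g ^ 2 = 2 / (g + 1) := Real.sq_sqrt (by positivity)
lemma ht_sq : tt g ^ 2 = 2 * g / (g + 1) := Real.sq_sqrt (by positivity)
lemma ht'_sq : tt' g ^ 2 = (g - 1) / (g + 1) :=
  Real.sq_sqrt (div_nonneg (by linarith) (by linarith))
lemma ht_gt : 1 < tt g := by
  rw [tt, show (1:ℝ) < Real.sqrt (2 * g / (g + 1)) ↔ _ from Real.lt_sqrt one_pos.le]
  rw [one_pow, lt_div_iff₀ (by linarith)]; linarith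
lemma hc_sq : cc g ^ 2 = g / (g - 1) :=
  Real.sq_sqrt (div_nonneg (by linarith) (by linarith))
lemma hc'_sq : cc' g ^ 2 = 1 / (g - 1) :=
  Real.sq_sqrt (div_nonneg (by linarith) (by linarith))
lemma hc_gt : 1 < cc g := by
  rw [cc, show (1:ℝ) < Real.sqrt (g / (g - 1)) ↔ _ from Real.lt_sqrt one_pos.le]
  rw [one_pow, lt_div_iff₀ (by linarith)]; linarith

lemma hs_facts : 0 < ss g ∧ Real.cosh (ss g) = tt g ∧ Real.sinh (ss g) = tt' g := by
  apply cosh_sinh_log (ht_gt hg) (Real.sqrt_nonneg _)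
  rw [Real.sq_sqrt (show (0:ℝ) ≤ (g - 1) / (g + 1) from div_nonneg (by linarith) (by linarith)),
    ht_sq hg, div_sub_div_same, show 2 * g - (g - 1) = g + 1 by ring,
    div_self (by linarith : g + 1 ≠ 0)]

lemma hd_facts : 0 < dd g ∧ Real.cosh (dd g) = cc g ∧ Real.sinh (dd g) = cc' g := by
  apply cosh_sinh_log (hc_gt hg) (Real.sqrt_nonneg _)
  rw [Real.sq_sqrt (show (0:ℝ) ≤ 1 / (g - 1) from div_nonneg (by linarith) (by linarith)),
    hc_sq hg, div_sub_div_same, div_self (by linarith : g - 1 ≠ 0)]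

lemma ha_sq' : aa g ^ 2 * (g + 1) = 2 := by
  rw [ha_sq hg]; field_simp

lemma hL_deriv (x : ℝ) : HasDerivAt (LL g)
    (aa g * kk g * Real.sinh (ss g - kk g * x) / Real.cosh (kk g * x - ss g) ^ 2) x := by
  have hu : HasDerivAt (fun y : ℝ => kk g * y - ss g) (kk g) x := by
    simpa using ((hasDerivAt_id x).const_mul (kk g)).sub_const (ss g)
  have hdiv := (hasDerivAt_const x (aa g)).div hu.cosh (ne_of_gt (Real.cosh_pos _))
  unfold LL
  refine hdiv.congr_deriv ?_
  rw [show ss g - kk g * x = -(kk g * x - ss g) by ring, Real.sinh_neg]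
  ring

lemma hR_deriv (x : ℝ) : HasDerivAt (RR g)
    ((Real.sqrt 2)⁻¹ / Real.cosh (x / Real.sqrt 2 + dd g) ^ 2) x := by
  have hv : HasDerivAt (fun y : ℝ => y / Real.sqrt 2 + dd g) ((Real.sqrt 2)⁻¹) x := by
    simpa [one_div] using ((hasDerivAt_id x).div_const (Real.sqrt 2)).add_const (dd g)
  have hdiv := hv.sinh.div hv.cosh (ne_of_gt (Real.cosh_pos _))
  unfold RR
  refine hdiv.congr_deriv ?_
  have hc := (Real.cosh_pos (x / Real.sqrt 2 + dd g)).ne'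
  have hcs := Real.cosh_sq_sub_sinh_sq (x / Real.sqrt 2 + dd g)
  have hs2' : Real.sqrt 2 ≠ 0 := by positivity
  set c := Real.cosh (x / Real.sqrt 2 + dd g)
  set sh := Real.sinh (x / Real.sqrt 2 + dd g)
  field_simp
  linear_combination hcs

lemma hL2_deriv (x : ℝ) : HasDerivAt
    (fun y => aa g * kk g * Real.sinh (ss g - kk g * y) / Real.cosh (kk g * y - ss g) ^ 2)
    ((g - 1) * LL g x + (1 - g ^ 2) * LL g x ^ 3) x := by
  have hw : HasDerivAt (fun y : ℝ => ss g - kk g * y) (-kk g) x := by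
    simpa using ((hasDerivAt_id x).const_mul (kk g)).const_sub (ss g)
  have hu : HasDerivAt (fun y : ℝ => kk g * y - ss g) (kk g) x := by
    simpa using ((hasDerivAt_id x).const_mul (kk g)).sub_const (ss g)
  have hnum := hw.sinh.const_mul (aa g * kk g)
  have hden := hu.cosh.pow 2
  have hdiv := hnum.div hden (pow_ne_zero 2 (ne_of_gt (Real.cosh_pos _)))
  refine hdiv.congr_deriv ?_
  simp only [Pi.pow_apply]
  rw [show ss g - kk g * x = -(kk g * x - ss g) by ring, Real.sinh_neg, Real.cosh_neg]
  simp only [LL]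
  have hcs := Real.cosh_sq_sub_sinh_sq (kk g * x - ss g)
  have hc := (Real.cosh_pos (kk g * x - ss g)).ne'
  have ha' := ha_sq' hg
  have hk2 := hk_sq hg
  set c := Real.cosh (kk g * x - ss g)
  set sh := Real.sinh (kk g * x - ss g)
  have h1 : g + 1 ≠ 0 := by linarith
  field_simp
  linear_combination (aa g * c * (g - 1)) * ha' +
    (aa g * (-c ^ 3 + 2 * sh ^ 2 * c)) * hk2 + (-2 * aa g * c * (g - 1)) * hcs

lemma hR2_deriv (x : ℝ) : HasDerivAt
    (fun y => (Real.sqrt 2)⁻¹ / Real.cosh (y / Real.sqrt 2 + dd g) ^ 2)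
    (-RR g x + RR g x ^ 3) x := by
  have hv : HasDerivAt (fun y : ℝ => y / Real.sqrt 2 + dd g) ((Real.sqrt 2)⁻¹) x := by
    simpa [one_div] using ((hasDerivAt_id x).div_const (Real.sqrt 2)).add_const (dd g)
  have hden := hv.cosh.pow 2
  have hdiv := (hasDerivAt_const x ((Real.sqrt 2)⁻¹)).div hden
    (pow_ne_zero 2 (ne_of_gt (Real.cosh_pos _)))
  refine hdiv.congr_deriv ?_
  simp only [Pi.pow_apply]
  simp only [RR]
  have hcs := Real.cosh_sq_sub_sinh_sq (x / Real.sqrt 2 + dd g)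
  have hc := (Real.cosh_pos (x / Real.sqrt 2 + dd g)).ne'
  have hs2 : Real.sqrt 2 * Real.sqrt 2 = 2 := Real.mul_self_sqrt two_pos.le
  have hs2' : Real.sqrt 2 ≠ 0 := by positivity
  set c := Real.cosh (x / Real.sqrt 2 + dd g)
  set sh := Real.sinh (x / Real.sqrt 2 + dd g)
  field_simp
  linear_combination (c * sh) * hs2 +
    (c * sh * Real.sqrt 2 ^ 2) * hcs

lemma hL0 : LL g 0 = aa g / tt g := by
  unfold LL
  rw [mul_zero, zero_sub, Real.cosh_neg, (hs_facts hg).2.1]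

lemma hR0 : RR g 0 = cc' g / cc g := by
  unfold RR
  rw [zero_div, zero_add, (hd_facts hg).2.1, (hd_facts hg).2.2]

lemma hL0_sq : LL g 0 ^ 2 = 1 / g := by
  rw [hL0 hg, div_pow, ha_sq hg, ht_sq hg]
  have h1 : g + 1 ≠ 0 := by linarith
  have h2 : g ≠ 0 := by linarith
  field_simp

lemma hL0_pos : 0 < LL g 0 := by
  rw [hL0 hg]
  exact div_pos (ha_pos hg) (lt_trans one_pos (ht_gt hg))

lemma hL0R0 : LL g 0 = RR g 0 := by
  apply sq_eq_of_nonneg (hL0_pos hg).le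
  · rw [hR0 hg]
    exact div_nonneg (Real.sqrt_nonneg _) (Real.sqrt_nonneg _)
  · rw [hL0_sq hg, hR0 hg, div_pow, hc_sq hg, hc'_sq hg]
    have h1 : g - 1 ≠ 0 := by linarith
    have h2 : g ≠ 0 := by linarith
    field_simp

lemma hD1_match :
    aa g * kk g * Real.sinh (ss g - kk g * 0) / Real.cosh (kk g * 0 - ss g) ^ 2
      = (Real.sqrt 2)⁻¹ / Real.cosh (0 / Real.sqrt 2 + dd g) ^ 2 := by
  rw [mul_zero, sub_zero, zero_sub, Real.cosh_neg, (hs_facts hg).2.1, (hs_facts hg).2.2,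
    zero_div, zero_add, (hd_facts hg).2.1]
  apply sq_eq_of_nonneg
  · exact div_nonneg (mul_nonneg (mul_nonneg (ha_pos hg).le (hk_pos hg).le)
      (Real.sqrt_nonneg _)) (sq_nonneg _)
  · have hcc : 0 < cc g := lt_trans one_pos (hc_gt hg)
    positivity
  · rw [div_pow, div_pow, mul_pow, mul_pow, ha_sq hg, hk_sq hg, ht'_sq hg,
      ← pow_mul, show 2 * 2 = 4 from rfl, show tt g ^ 4 = (tt g ^ 2) ^ 2 by ring, ht_sq hg,
      inv_pow, Real.sq_sqrt two_pos.le, ← pow_mul, show (cc g ^ (2 * 2) : ℝ) = (cc g ^ 2) ^ 2 by ring,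
      hc_sq hg]
    have h1 : g + 1 ≠ 0 := by linarith
    have h2 : g ≠ 0 := by linarith
    have h3 : g - 1 ≠ 0 := by linarith
    field_simp

lemma hBL {y : ℝ} (hy : y ≤ 0) : BB g y = LL g y := if_pos hy

lemma hBR {y : ℝ} (hy : 0 ≤ y) : BB g y = RR g y := by
  rcases eq_or_lt_of_le hy with rfl | hy'
  · rw [show BB g 0 = LL g 0 from if_pos le_rfl, hL0R0 hg]
  · exact if_neg (not_le.2 hy')

lemma hB_deriv (x : ℝ) : HasDerivAt (BB g) (DD1 g x) x := by
  rcases lt_trichotomy x 0 with hx | rfl | hx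
  · have hev : BB g =ᶠ[nhds x] LL g := by
      filter_upwards [Iio_mem_nhds hx] with y hy
      exact hBL hg hy.le
    have h := (hL_deriv hg x).congr_of_eventuallyEq hev
    rwa [show DD1 g x = aa g * kk g * Real.sinh (ss g - kk g * x) /
      Real.cosh (kk g * x - ss g) ^ 2 from if_pos hx.le]
  · have hval : DD1 g 0 = aa g * kk g * Real.sinh (ss g - kk g * 0) /
        Real.cosh (kk g * 0 - ss g) ^ 2 := if_pos le_rfl
    have h1 : HasDerivWithinAt (BB g) (DD1 g 0) (Iic 0) 0 := by
      rw [hval]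
      exact ((hL_deriv hg 0).hasDerivWithinAt).congr (fun y hy => hBL hg hy)
        (hBL hg le_rfl)
    have h2 : HasDerivWithinAt (BB g) (DD1 g 0) (Ici 0) 0 := by
      rw [hval, hD1_match hg]
      exact ((hR_deriv hg 0).hasDerivWithinAt).congr (fun y hy => hBR hg hy)
        (hBR hg le_rfl)
    have h3 := h1.union h2
    rw [Iic_union_Ici] at h3
    exact hasDerivWithinAt_univ.1 h3
  · have hev : BB g =ᶠ[nhds x] RR g := by
      filter_upwards [Ioi_mem_nhds hx] with y hy
      exact hBR hg hy.le
    have h := (hR_deriv hg x).congr_of_eventuallyEq hev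
    rwa [show DD1 g x = (Real.sqrt 2)⁻¹ / Real.cosh (x / Real.sqrt 2 + dd g) ^ 2
      from if_neg (not_le.2 hx)]

lemma hB0L : BB g 0 = LL g 0 := hBL hg le_rfl

lemma hB0_sq : BB g 0 ^ 2 = 1 / g := by rw [hB0L hg]; exact hL0_sq hg

lemma hB0_pos : 0 < BB g 0 := by rw [hB0L hg]; exact hL0_pos hg

lemma hB0_sq' : g * BB g 0 ^ 2 = 1 := by
  rw [hB0_sq hg]; field_simp

lemma hD2_match : -BB g 0 + BB g 0 ^ 3 = DD2 g 0 := by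
  have hp' := hB0_sq' hg
  rw [show DD2 g 0 = (g - 1) * BB g 0 + (1 - g ^ 2) * BB g 0 ^ 3 from if_pos le_rfl]
  linear_combination (g * BB g 0) * hp'

lemma hD1_deriv (x : ℝ) : HasDerivAt (DD1 g) (DD2 g x) x := by
  rcases lt_trichotomy x 0 with hx | rfl | hx
  · have hev : DD1 g =ᶠ[nhds x] fun y =>
        aa g * kk g * Real.sinh (ss g - kk g * y) / Real.cosh (kk g * y - ss g) ^ 2 := by
      filter_upwards [Iio_mem_nhds hx] with y hy
      exact if_pos hy.le
    have h := (hL2_deriv hg x).congr_of_eventuallyEq hev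
    rwa [show DD2 g x = (g - 1) * BB g x + (1 - g ^ 2) * BB g x ^ 3 from if_pos hx.le,
      hBL hg hx.le]
  · have hval : DD2 g 0 = (g - 1) * LL g 0 + (1 - g ^ 2) * LL g 0 ^ 3 := by
      rw [show DD2 g 0 = (g - 1) * BB g 0 + (1 - g ^ 2) * BB g 0 ^ 3 from if_pos le_rfl,
        hB0L hg]
    have h1 : HasDerivWithinAt (DD1 g) (DD2 g 0) (Iic 0) 0 := by
      rw [hval]
      exact ((hL2_deriv hg 0).hasDerivWithinAt).congr (fun y hy => if_pos hy) (if_pos le_rfl)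
    have h2 : HasDerivWithinAt (DD1 g) (DD2 g 0) (Ici 0) 0 := by
      rw [show DD2 g 0 = -RR g 0 + RR g 0 ^ 3 by
        rw [← hD2_match hg, ← hBR hg le_rfl]]
      refine ((hR2_deriv hg 0).hasDerivWithinAt).congr (fun y hy => ?_) ?_
      · rcases eq_or_lt_of_le (Set.mem_Ici.mp hy) with rfl | hy'
        · exact (if_pos le_rfl).trans (hD1_match hg)
        · exact if_neg (not_le.2 hy')
      · exact (if_pos le_rfl).trans (hD1_match hg)
    have h3 := h1.union h2
    rw [Iic_union_Ici] at h3
    exact hasDerivWithinAt_univ.1 h3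
  · have hev : DD1 g =ᶠ[nhds x] fun y =>
        (Real.sqrt 2)⁻¹ / Real.cosh (y / Real.sqrt 2 + dd g) ^ 2 := by
      filter_upwards [Ioi_mem_nhds hx] with y hy
      exact if_neg (not_le.2 hy)
    have h := (hR2_deriv hg x).congr_of_eventuallyEq hev
    rwa [show DD2 g x = -BB g x + BB g x ^ 3 from if_neg (not_le.2 hx), hBR hg hx.le]

lemma hD1_pos (x : ℝ) : 0 < DD1 g x := by
  rcases le_or_gt x 0 with hx | hx
  · rw [show DD1 g x = aa g * kk g * Real.sinh (ss g - kk g * x) /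
      Real.cosh (kk g * x - ss g) ^ 2 from if_pos hx]
    have hs0 := (hs_facts hg).1
    have harg : 0 < ss g - kk g * x := by nlinarith [mul_nonneg (hk_pos hg).le (neg_nonneg.2 hx)]
    exact div_pos (mul_pos (mul_pos (ha_pos hg) (hk_pos hg)) (Real.sinh_pos_iff.2 harg))
      (pow_pos (Real.cosh_pos _) 2)
  · rw [show DD1 g x = (Real.sqrt 2)⁻¹ / Real.cosh (x / Real.sqrt 2 + dd g) ^ 2
      from if_neg (not_le.2 hx)]
    exact div_pos (inv_pos.2 (Real.sqrt_pos.2 two_pos)) (pow_pos (Real.cosh_pos _) 2)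

lemma hB_mono : StrictMono (BB g) :=
  strictMono_of_hasDerivAt_pos (hB_deriv hg) (hD1_pos hg)

lemma hB_pos (x : ℝ) : 0 < BB g x := by
  rcases le_or_gt x 0 with hx | hx
  · rw [hBL hg hx]
    exact div_pos (ha_pos hg) (Real.cosh_pos _)
  · rw [hBR hg hx.le]
    have hd0 := (hd_facts hg).1
    have hv : 0 < x / Real.sqrt 2 + dd g := by
      have : 0 < x / Real.sqrt 2 := div_pos hx (Real.sqrt_pos.2 two_pos)
      linarith
    exact div_pos (Real.sinh_pos_iff.2 hv) (Real.cosh_pos _)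

lemma hB0_lt_one : BB g 0 < 1 := by
  have h := hB0_sq' hg
  by_contra hcon
  push_neg at hcon
  nlinarith [hg0 hg, mul_le_mul hcon hcon one_pos.le (by linarith : (0:ℝ) ≤ BB g 0)]

lemma hB_lt_one (x : ℝ) : BB g x < 1 := by
  rcases le_or_gt x 0 with hx | hx
  · calc BB g x ≤ BB g 0 := (hB_mono hg).monotone hx
      _ < 1 := hB0_lt_one hg
  · rw [hBR hg hx.le]
    unfold RR
    rw [div_lt_one (Real.cosh_pos _)]
    nlinarith [Real.cosh_sub_sinh (x / Real.sqrt 2 + dd g),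
      Real.exp_pos (-(x / Real.sqrt 2 + dd g))]

lemma hgB_le {x : ℝ} (hx : x ≤ 0) : g * BB g x ^ 2 ≤ 1 := by
  have h1 : BB g x ≤ BB g 0 := (hB_mono hg).monotone hx
  nlinarith [hB0_sq' hg, hg0 hg, mul_nonneg (sub_nonneg.2 h1) (hB_pos hg x).le,
    mul_nonneg (sub_nonneg.2 h1) (hB0_pos hg).le]

lemma hgB_gt {x : ℝ} (hx : 0 < x) : 1 < g * BB g x ^ 2 := by
  have h1 : BB g 0 < BB g x := hB_mono hg hx
  nlinarith [hB0_sq' hg, hg0 hg, mul_pos (sub_pos.2 h1) (hB0_pos hg),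
    mul_pos (sub_pos.2 h1) (hB_pos hg x)]

lemma hmax (x : ℝ) :
    DD2 g x = BB g x * (g * max 0 (1 - g * BB g x ^ 2) + BB g x ^ 2 - 1) := by
  rcases le_or_gt x 0 with hx | hx
  · rw [max_eq_right (by linarith [hgB_le hg hx]),
      show DD2 g x = (g - 1) * BB g x + (1 - g ^ 2) * BB g x ^ 3 from if_pos hx]
    ring
  · rw [max_eq_left (by linarith [hgB_gt hg hx]),
      show DD2 g x = -BB g x + BB g x ^ 3 from if_neg (not_le.2 hx)]
    ring

lemma hB_cont : Continuous (BB g) :=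
  (Differentiable.continuous fun x => (hB_deriv hg x).differentiableAt : _)

lemma hD2_cont : Continuous (DD2 g) := by
  have hBc := hB_cont hg
  have h : Continuous fun x => BB g x * (g * max 0 (1 - g * BB g x ^ 2) + BB g x ^ 2 - 1) :=
    hBc.mul (((continuous_const.mul (continuous_const.max
      (continuous_const.sub (continuous_const.mul (hBc.pow 2))))).add (hBc.pow 2)).sub
      continuous_const)
  rw [show DD2 g = fun x => BB g x * (g * max 0 (1 - g * BB g x ^ 2) + BB g x ^ 2 - 1)
    from funext (hmax hg)]
  exact h

lemma hderivB : deriv (BB g) = DD1 g := funext fun x => (hB_deriv hg x).deriv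

lemma hderivD1 : deriv (DD1 g) = DD2 g := funext fun x => (hD1_deriv hg x).deriv

lemma hB_contDiff : ContDiff ℝ 2 (BB g) := by
  rw [show (2 : WithTop ℕ∞) = 1 + 1 from rfl, contDiff_succ_iff_deriv]
  refine ⟨fun x => (hB_deriv hg x).differentiableAt, by simp, ?_⟩
  rw [hderivB hg, contDiff_one_iff_deriv]
  exact ⟨fun x => (hD1_deriv hg x).differentiableAt, (hderivD1 hg) ▸ (hD2_cont hg)⟩

lemma hB_iter (x : ℝ) : iteratedDeriv 2 (BB g) x = DD2 g x := by
  rw [show (2 : ℕ) = 1 + 1 from rfl, iteratedDeriv_succ, iteratedDeriv_one,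
    hderivB hg, hderivD1 hg]

omit hg in
lemma hcosh_atBot : Tendsto Real.cosh atBot atTop := by
  have hexp : Tendsto (fun u : ℝ => Real.exp (-u) / 2) atBot atTop :=
    (Real.tendsto_exp_atTop.comp tendsto_neg_atBot_atTop).atTop_div_const two_pos
  exact tendsto_atTop_mono (fun u => by
    rw [Real.cosh_eq]; nlinarith [Real.exp_pos u]) hexp

omit hg in
lemma hcosh_atTop : Tendsto Real.cosh atTop atTop := by
  have hexp : Tendsto (fun u : ℝ => Real.exp u / 2) atTop atTop :=
    Real.tendsto_exp_atTop.atTop_div_const two_pos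
  exact tendsto_atTop_mono (fun u => by
    rw [Real.cosh_eq]; nlinarith [Real.exp_pos (-u)]) hexp

lemma hBbot : Tendsto (BB g) atBot (nhds 0) := by
  have harg : Tendsto (fun x : ℝ => kk g * x - ss g) atBot atBot := by
    have h1 : Tendsto (fun x : ℝ => kk g * x) atBot atBot :=
      tendsto_id.const_mul_atBot (hk_pos hg)
    simpa [sub_eq_add_neg] using tendsto_atBot_add_const_right atBot (-(ss g)) h1
  have hL : Tendsto (LL g) atBot (nhds 0) := by
    have h := Filter.Tendsto.div_atTop (f := fun _ : ℝ => aa g) (a := aa g)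
      tendsto_const_nhds (hcosh_atBot.comp harg)
    exact h
  exact Filter.Tendsto.congr'
    (by filter_upwards [eventually_le_atBot (0 : ℝ)] with y hy
        exact (hBL hg hy).symm) hL

lemma hBtop : Tendsto (BB g) atTop (nhds 1) := by
  have hv : Tendsto (fun x : ℝ => x / Real.sqrt 2 + dd g) atTop atTop :=
    tendsto_atTop_add_const_right _ (dd g)
      (tendsto_id.atTop_div_const (Real.sqrt_pos.2 two_pos))
  have h0 : Tendsto (fun u : ℝ => Real.exp (-u) / Real.cosh u) atTop (nhds 0) :=
    (Real.tendsto_exp_atBot.comp tendsto_neg_atTop_atBot).div_atTop hcosh_atTop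
  have htanh : Tendsto (fun u : ℝ => Real.sinh u / Real.cosh u) atTop (nhds 1) := by
    have h1 : Tendsto (fun u : ℝ => 1 - Real.exp (-u) / Real.cosh u) atTop (nhds (1 - 0)) :=
      tendsto_const_nhds.sub h0
    rw [sub_zero] at h1
    refine h1.congr fun u => ?_
    have hc := (Real.cosh_pos u).ne'
    have hcs := Real.cosh_sub_sinh u
    field_simp
    linarith
  have hR : Tendsto (RR g) atTop (nhds 1) := by
    have h := htanh.comp hv
    exact h
  exact Filter.Tendsto.congr'
    (by filter_upwards [eventually_gt_atTop (0 : ℝ)] with y hy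
        exact (hBR hg hy.le).symm) hR

end Facts

/-- The case `ε = 0`: for any `g > 1` there is a strictly
increasing `B ∈ C²(ℝ)` with `0 < B < 1`, `B → 0` at `−∞`, `B → 1` at `+∞`,
satisfying `B'' = −B + B³` where `B² ≥ 1/g` and `B'' = (g−1)B + (1−g²)B³`
where `B² ≤ 1/g`; and `A := √(max{0, 1−gB²})` is continuous and the pair
`(A,B)` satisfies `A(A²+gB²−1)=0`, `B'' = B(gA²+B²−1)`, with heteroclinic
limits `(1,0)` at `−∞` and `(0,1)` at `+∞`. -/
theorem epsilon_zero_heteroclinic (g : ℝ) (hg : 1 < g) :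
    ∃ B : ℝ → ℝ, StrictMono B ∧ ContDiff ℝ 2 B ∧
      (∀ x : ℝ, 0 < B x ∧ B x < 1) ∧
      Filter.Tendsto B Filter.atBot (nhds 0) ∧
      Filter.Tendsto B Filter.atTop (nhds 1) ∧
      (∀ x : ℝ, B x ^ 2 ≥ 1 / g → iteratedDeriv 2 B x = -B x + B x ^ 3) ∧
      (∀ x : ℝ, B x ^ 2 ≤ 1 / g →
        iteratedDeriv 2 B x = (g - 1) * B x + (1 - g ^ 2) * B x ^ 3) ∧
      Continuous (fun x => Real.sqrt (max 0 (1 - g * B x ^ 2))) ∧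
      (∀ x : ℝ,
        (Real.sqrt (max 0 (1 - g * B x ^ 2))) *
          ((Real.sqrt (max 0 (1 - g * B x ^ 2))) ^ 2 + g * B x ^ 2 - 1) = 0 ∧
        iteratedDeriv 2 B x
          = B x * (g * (Real.sqrt (max 0 (1 - g * B x ^ 2))) ^ 2 + B x ^ 2 - 1)) ∧
      Filter.Tendsto (fun x => ((Real.sqrt (max 0 (1 - g * B x ^ 2))), B x))
        Filter.atBot (nhds ((1 : ℝ), (0 : ℝ))) ∧
      Filter.Tendsto (fun x => ((Real.sqrt (max 0 (1 - g * B x ^ 2))), B x))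
        Filter.atTop (nhds ((0 : ℝ), (1 : ℝ))) := by
  have hgpos : (0:ℝ) < g := lt_trans one_pos hg
  have hφ : Continuous (fun b : ℝ => Real.sqrt (max 0 (1 - g * b ^ 2))) :=
    (continuous_const.max (continuous_const.sub
      (continuous_const.mul (continuous_pow 2)))).sqrt
  refine ⟨BB g, hB_mono hg, hB_contDiff hg, fun x => ⟨hB_pos hg x, hB_lt_one hg x⟩,
    hBbot hg, hBtop hg, ?_, ?_, hφ.comp (hB_cont hg), ?_, ?_, ?_⟩
  · intro x hx
    rw [hB_iter hg]
    rcases le_or_gt x 0 with h | h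
    · have h1 : g * BB g x ^ 2 ≤ 1 := hgB_le hg h
      have h2 : 1 ≤ BB g x ^ 2 * g := (div_le_iff₀ hgpos).mp hx
      have h2' : g * BB g x ^ 2 = 1 := by linarith
      rw [show DD2 g x = (g - 1) * BB g x + (1 - g ^ 2) * BB g x ^ 3 from if_pos h]
      linear_combination (-(g * BB g x)) * h2'
    · exact if_neg (not_le.2 h)
  · intro x hx
    rw [hB_iter hg]
    rcases le_or_gt x 0 with h | h
    · exact if_pos h
    · exact absurd ((le_div_iff₀ hgpos).mp hx) (by linarith [hgB_gt hg h])
  · intro x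
    constructor
    · rcases le_or_gt 0 (1 - g * BB g x ^ 2) with h | h
      · rw [max_eq_right h, Real.sq_sqrt h]; ring
      · rw [max_eq_left h.le, Real.sqrt_zero]; ring
    · rw [hB_iter hg, hmax hg x, Real.sq_sqrt (le_max_left _ _)]
  · have h1 : Filter.Tendsto (fun x => Real.sqrt (max 0 (1 - g * BB g x ^ 2)))
        Filter.atBot (nhds 1) := by
      have h := (hφ.tendsto 0).comp (hBbot hg)
      simp only [Function.comp_def] at h
      simpa using h
    exact h1.prodMk_nhds (hBbot hg)
  · have h1 : Filter.Tendsto (fun x => Real.sqrt (max 0 (1 - g * BB g x ^ 2)))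
        Filter.atTop (nhds 0) := by
      have h := (hφ.tendsto 1).comp (hBtop hg)
      have he : Real.sqrt (max 0 (1 - g * (1:ℝ) ^ 2)) = 0 := by
        rw [max_eq_left (by nlinarith), Real.sqrt_zero]
      rwa [he] at h
    exact h1.prodMk_nhds (hBtop hg)
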